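/- Let K be an infinite virtually cyclic group and φ : K → K an injective homomorphism. Then there exists an element x ∈ K of infinite order such that φ maps the cyclic subgroup ⟨x⟩ into itself, i.e., φ(⟨x⟩) ⊆ ⟨x⟩. -/

import Mathlib

open Subgroup

private lemma index_zpowers_zpow {K : Type*} [Group K] (y : K) (hy : ¬ IsOfFinOrder y)
    (m : ℤ) : (zpowers (y ^ m)).index = m.natAbs * (zpowers y).index := by
  have hz : Function.Injective fun n : ℤ => y ^ n :=
    injective_zpow_iff_not_isOfFinOrder.mpr hy
  have hinj : Function.Injective (zpowersHom K y) := by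
    intro s t hst
    exact Multiplicative.toAdd.injective (hz hst)
  have h1 : ((zpowers (Multiplicative.ofAdd m)).map (zpowersHom K y)) = zpowers (y ^ m) := by
    rw [MonoidHom.map_zpowers]
    rfl
  have h2 := Subgroup.index_map_of_injective (zpowers (Multiplicative.ofAdd m)) hinj
  rw [h1] at h2
  have h3 : (zpowers (Multiplicative.ofAdd m)).index = m.natAbs := by
    have he : AddSubgroup.toSubgroup (AddSubgroup.zmultiples m) =
        zpowers (Multiplicative.ofAdd m) := by
      ext x
      constructor
      · rintro ⟨k, hk⟩
        refine ⟨k, ?_⟩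
        have hk' : k • m = Multiplicative.toAdd x := hk
        show Multiplicative.ofAdd m ^ k = x
        have := congrArg Multiplicative.ofAdd hk'
        rwa [ofAdd_zsmul, ofAdd_toAdd] at this
      · rintro ⟨k, hk⟩
        refine ⟨k, ?_⟩
        have hk' : Multiplicative.ofAdd m ^ k = x := hk
        show k • m = Multiplicative.toAdd x
        rw [← ofAdd_zsmul] at hk'
        simpa [mul_comm] using congrArg Multiplicative.toAdd hk'
    rw [← he, AddSubgroup.index_toSubgroup, Int.index_zmultiples]
  rw [h3, Subgroup.range_zpowersHom] at h2
  exact h2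

theorem injective_endo_of_infinite_vc_restricts_to_cyclic
    {K : Type*} [Group K] [Infinite K]
    (hK : ∃ C : Subgroup K, IsCyclic C ∧ C.FiniteIndex)
    (φ : K →* K) (hφ : Function.Injective φ) :
    ∃ x : K, ¬ IsOfFinOrder x ∧
      (Subgroup.zpowers x).map φ ≤ Subgroup.zpowers x := by
  obtain ⟨C, hCcyc, hCfi⟩ := hK
  haveI := hCfi
  -- C is infinite
  have hCinf : Infinite C := by
    by_contra hfin
    rw [not_infinite_iff_finite] at hfin
    haveI : Finite (K ⧸ C) := Subgroup.finite_quotient_of_finiteIndex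
    haveI : Finite K :=
      Finite.of_equiv _ (Subgroup.groupEquivQuotientProdSubgroup (s := C)).symm
    exact not_finite K
  -- get a generator g of C, of infinite order
  obtain ⟨h, hh⟩ := hCcyc
  have hzC : zpowers (h : K) = C := by
    have h1 : (zpowers h).map C.subtype = zpowers (h : K) := by
      rw [MonoidHom.map_zpowers]; rfl
    have h2 : zpowers h = (⊤ : Subgroup C) := by
      ext x
      simp only [Subgroup.mem_top, iff_true]
      exact (hh x).imp fun k hk => hk
    rw [h2, ← MonoidHom.range_eq_map, Subgroup.range_subtype] at h1
    exact h1.symm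
  set g : K := (h : K) with hg
  have hgfin : ¬ IsOfFinOrder g := by
    intro hfin
    have hfz : (zpowers g : Set K).Finite := finite_zpowers.mpr hfin
    rw [hzC] at hfz
    haveI := hfz.to_subtype
    exact not_finite C
  have hn : (zpowers g).index ≠ 0 := by
    rw [hzC]; exact hCfi.index_ne_zero
  haveI hfi : (zpowers g).FiniteIndex := ⟨hn⟩
  -- φ g has infinite order
  have hφgfin : ¬ IsOfFinOrder (φ g) := by
    rw [← orderOf_eq_zero_iff] at hgfin ⊢
    rwa [orderOf_injective φ hφ g]
  -- pigeonhole: some nonzero power of φ g lies in zpowers g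
  haveI : Finite (K ⧸ zpowers g) := Subgroup.finite_quotient_of_finiteIndex
  obtain ⟨k, l, hkl, hcong⟩ := Finite.exists_ne_map_eq_of_infinite
    (fun n : ℤ => ((φ g ^ n : K) : K ⧸ zpowers g))
  have ha : φ g ^ (l - k) ∈ zpowers g := by
    have := QuotientGroup.eq.mp hcong
    rw [← zpow_neg, ← zpow_add] at this
    rwa [sub_eq_neg_add]
  set a : ℤ := l - k with ha'
  have ha0 : a ≠ 0 := sub_ne_zero.mpr (Ne.symm hkl)
  obtain ⟨b, hb⟩ := Subgroup.mem_zpowers_iff.mp ha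
  have hb0 : b ≠ 0 := by
    intro h0
    rw [h0] at hb
    simp at hb
    exact hφgfin (isOfFinOrder_iff_zpow_eq_one.mpr ⟨a, ha0, hb.symm⟩)
  -- index computation: b.natAbs = a.natAbs * [K : φ.range]
  have h1 : (zpowers (g ^ b)).index = b.natAbs * (zpowers g).index :=
    index_zpowers_zpow g hgfin b
  have h2 : (zpowers (φ g ^ a)).index = a.natAbs * (zpowers g).index * φ.range.index := by
    have e2 : zpowers (φ g ^ a) = (zpowers (g ^ a)).map φ := by
      rw [← map_zpow, MonoidHom.map_zpowers]
    rw [e2, Subgroup.index_map_of_injective _ hφ, index_zpowers_zpow g hgfin a]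
  have heq : b.natAbs * (zpowers g).index = a.natAbs * (zpowers g).index * φ.range.index := by
    rw [← h1, ← h2, hb]
  have hdvdN : a.natAbs ∣ b.natAbs := by
    refine ⟨φ.range.index, ?_⟩
    have hre : (zpowers g).index * b.natAbs = (zpowers g).index * (a.natAbs * φ.range.index) := by
      rw [mul_comm ((zpowers g).index) b.natAbs, heq]; ring
    exact Nat.eq_of_mul_eq_mul_left (Nat.pos_of_ne_zero hn) hre
  obtain ⟨t, ht⟩ := Int.natAbs_dvd_natAbs.mp hdvdN
  -- the element x = g ^ a works
  refine ⟨g ^ a, ?_, ?_⟩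
  · rw [← injective_zpow_iff_not_isOfFinOrder]
    intro s t hst
    have hst' : (g ^ a) ^ s = (g ^ a) ^ t := hst
    rw [← zpow_mul, ← zpow_mul] at hst'
    exact mul_left_cancel₀ ha0 (injective_zpow_iff_not_isOfFinOrder.mpr hgfin hst')
  · rintro y ⟨w, hw, rfl⟩
    obtain ⟨k, rfl⟩ := Subgroup.mem_zpowers_iff.mp hw
    have e : φ ((g ^ a) ^ k) = (g ^ a) ^ (t * k) := by
      rw [map_zpow, map_zpow, ← hb, ht, zpow_mul, zpow_mul]
    exact Subgroup.mem_zpowers_iff.mpr ⟨t * k, e.symm⟩
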